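/- Let (σ, B) and (σ', B') be two such data on L: σ, σ' ∈ L⊗ℂ with (σ,σ) = (σ',σ') = 0, (σ,σ̄) > 0, (σ',σ̄') > 0, and B, B' ∈ L⊗ℚ. If there exists an isometry g of the Mukai lattice Λ̃ whose ℂ-linear extension maps the line ℂ·exp(B)σ onto the line ℂ·exp(B')σ', then there exists a Hodge isometry T(X,α_B) ≅ T(X',α_{B'}), i.e. an isomorphism of ℤ-modules preserving the bilinear forms whose ℂ-linear extension maps the line ℂσ onto the line ℂσ'. -/

import Mathlib

/-!
Statement 19: Let (σ,B) and (σ',B') be two twisted K3 periods on L. If there exists an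
isometry g of the Mukai lattice Λ̃ whose ℂ-linear extension maps the line ℂ·exp(B)σ onto
the line ℂ·exp(B')σ', then there exists a Hodge isometry T(X,α_B) ≅ T(X',α_{B'}): an
isomorphism of ℤ-modules preserving the bilinear forms whose ℂ-linear extension maps the
line ℂσ onto the line ℂσ'.
-/

open scoped TensorProduct ComplexOrder

set_option synthInstance.maxHeartbeats 1000000
set_option maxHeartbeats 1000000

noncomputable section

variable (L : Type) [AddCommGroup L]

/-- `L ⊗ ℚ`. -/
abbrev LQ := ℚ ⊗[ℤ] L
/-- `L ⊗ ℂ`. -/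
abbrev LC := ℂ ⊗[ℤ] L

/-- The canonical map `L → L⊗ℚ`. -/
def iLQ : L →ₗ[ℤ] LQ L := TensorProduct.mk ℤ ℚ L 1
/-- The canonical map `L → L⊗ℂ`. -/
def iLC : L →ₗ[ℤ] LC L := TensorProduct.mk ℤ ℂ L 1
/-- The canonical map `L⊗ℚ → L⊗ℂ`. -/
def qToC : LQ L →ₗ[ℤ] LC L :=
  LinearMap.rTensor L ((Algebra.linearMap ℚ ℂ).restrictScalars ℤ)
/-- Complex conjugation on `L⊗ℂ`, fixing the real points. -/
def conjL : LC L →ₗ[ℤ] LC L :=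
  LinearMap.rTensor L ((starRingEnd ℂ).toAddMonoidHom.toIntLinearMap)

/-- The ℚ-bilinear extension of the form on `L` to `L⊗ℚ`. -/
def bQ (l : L →ₗ[ℤ] L →ₗ[ℤ] ℤ) : LinearMap.BilinForm ℚ (LQ L) :=
  LinearMap.BilinForm.baseChange ℚ l
/-- The ℂ-bilinear extension of the form on `L` to `L⊗ℂ`. -/
def bC (l : L →ₗ[ℤ] L →ₗ[ℤ] ℤ) : LinearMap.BilinForm ℂ (LC L) :=
  LinearMap.BilinForm.baseChange ℂ l

/-- The Mukai lattice `Λ̃ = ℤ ⊕ L ⊕ ℤ`. -/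
abbrev MukaiLattice := ℤ × L × ℤ

/-- The embedding `Λ̃ → Λ̃⊗ℂ`. -/
def embC (δ : MukaiLattice L) : ℂ × LC L × ℂ := ((δ.1 : ℂ), iLC L δ.2.1, (δ.2.2 : ℂ))

/-- The integral Mukai pairing on `Λ̃`. -/
def mZ (l : L →ₗ[ℤ] L →ₗ[ℤ] ℤ) (x y : MukaiLattice L) : ℤ :=
  l x.2.1 y.2.1 - x.1 * y.2.2 - y.1 * x.2.2

/-- The period of the B-field transform, `exp(B)σ := (0, σ, (B,σ))`, for rational `B`. -/
def expB (l : L →ₗ[ℤ] L →ₗ[ℤ] ℤ) (B : LQ L) (σ : LC L) : ℂ × LC L × ℂ :=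
  ((0 : ℂ), σ, bC L l (qToC L B) σ)

/-- The twisted transcendental lattice
`T(X,α_B) = {γ ∈ L : γ ⊥ Pic(X) and (γ,B) ∈ ℤ}`, as a ℤ-submodule of `L`. -/
def TXB (l : L →ₗ[ℤ] L →ₗ[ℤ] ℤ) (σ : LC L) (B : LQ L) : Submodule ℤ L where
  carrier := {γ : L | (∀ δ : L, bC L l (iLC L δ) σ = 0 → l γ δ = 0) ∧
    ∃ n : ℤ, bQ L l (iLQ L γ) B = (n : ℚ)}
  add_mem' := by
    rintro a b ⟨ha1, na, hna⟩ ⟨hb1, nb, hnb⟩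
    refine ⟨fun δ hδ => ?_, na + nb, ?_⟩
    · simp [map_add, LinearMap.add_apply, ha1 δ hδ, hb1 δ hδ]
    · simp only [map_add, LinearMap.add_apply, hna, hnb]
      push_cast
      ring
  zero_mem' := by
    refine ⟨fun δ _ => by simp, 0, by simp⟩
  smul_mem' := by
    rintro c a ⟨ha1, n, hn⟩
    refine ⟨fun δ hδ => ?_, c * n, ?_⟩
    · simp [map_zsmul, LinearMap.smul_apply, ha1 δ hδ]
    · simp only [map_zsmul, LinearMap.smul_apply, hn, zsmul_eq_mul]
      push_cast
      ring

/-! An integral Mukai vector orthogonal to every integral vector that is orthogonal to `exp(B)σ`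
has the form `(0, γ, (γ,B)) = exp(B)γ` with `γ ∈ T(X,α_B)`: pairing with `(0,0,1)`, with
`(0,δ,0)` for `δ ∈ Pic(X)` and with `(N, NB, 0)` for a denominator `N` of `B` gives the three
conditions. So the middle projection identifies this lattice with `T(X,α_B)`. Since `g_ℂ` is an
isometry carrying the line `ℂ·exp(B)σ` to `ℂ·exp(B')σ'`, `g` maps the lattice for `(σ,B)` onto the
one for `(σ',B')`, and conjugating by the projections gives the Hodge isometry; its complex
extension is the middle component of `g_ℂ ∘ exp(B)`. -/

section MukaiLattice

variable {L} (l : L →ₗ[ℤ] L →ₗ[ℤ] ℤ)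

lemma iLC_apply (a : L) : iLC L a = (1 : ℂ) ⊗ₜ[ℤ] a := rfl

lemma iLQ_apply (a : L) : iLQ L a = (1 : ℚ) ⊗ₜ[ℤ] a := rfl

@[simp]
lemma bC_iLC_iLC (a b : L) : bC L l (iLC L a) (iLC L b) = l a b := by
  simp [bC, iLC_apply, LinearMap.BilinForm.baseChange_tmul]

@[simp]
lemma bQ_iLQ_iLQ (a b : L) : bQ L l (iLQ L a) (iLQ L b) = l a b := by
  simp [bQ, iLQ_apply, LinearMap.BilinForm.baseChange_tmul]

lemma qToC_iLQ (b : L) : qToC L (iLQ L b) = iLC L b := by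
  rw [qToC, iLQ_apply, iLC_apply]
  exact (LinearMap.rTensor_tmul _ _ _ _).trans (by simp)

lemma exists_zsmul_eq_iLQ (B : LQ L) : ∃ N : ℤ, N ≠ 0 ∧ ∃ b : L, N • B = iLQ L b := by
  obtain ⟨⟨b, N⟩, h⟩ := IsLocalizedModule.surj (nonZeroDivisors ℤ) (TensorProduct.mk ℤ ℚ L 1) B
  exact ⟨N, nonZeroDivisors.coe_ne_zero N, b, h⟩

lemma bQ_iLQ_eq_intCast_iff {N : ℤ} (hN : N ≠ 0) {B : LQ L} {b : L} (hNB : N • B = iLQ L b)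
    (γ : L) (n : ℤ) : bQ L l (iLQ L γ) B = n ↔ l γ b = N * n := by
  have hNQ : (N : ℚ) ≠ 0 := Int.cast_ne_zero.2 hN
  rw [← (mul_right_injective₀ hNQ).eq_iff, ← zsmul_eq_mul, ← LinearMap.map_smul_of_tower, hNB,
    bQ_iLQ_iLQ]
  exact_mod_cast Iff.rfl

lemma zsmul_bC_qToC {N : ℤ} {B : LQ L} {b : L} (hNB : N • B = iLQ L b) (v : LC L) :
    N • bC L l (qToC L B) v = bC L l (iLC L b) v := by
  rw [← qToC_iLQ, ← hNB, map_zsmul, map_zsmul, LinearMap.smul_apply]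

def mukaiC : LinearMap.BilinForm ℂ (ℂ × LC L × ℂ) :=
  LinearMap.mk₂ ℂ (fun x y => bC L l x.2.1 y.2.1 - x.1 * y.2.2 - y.1 * x.2.2)
    (fun _ _ _ => by
      simp only [Prod.fst_add, Prod.snd_add, map_add, LinearMap.add_apply]
      ring)
    (fun _ _ _ => by
      simp only [Prod.smul_fst, Prod.smul_snd, map_smul, LinearMap.smul_apply, smul_eq_mul]
      ring)
    (fun _ _ _ => by
      simp only [Prod.fst_add, Prod.snd_add, map_add]
      ring)
    (fun _ _ _ => by
      simp only [Prod.smul_fst, Prod.smul_snd, map_smul, smul_eq_mul]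
      ring)

lemma mukaiC_apply (x y : ℂ × LC L × ℂ) :
    mukaiC l x y = bC L l x.2.1 y.2.1 - x.1 * y.2.2 - y.1 * x.2.2 := rfl

@[simp]
lemma mukaiC_embC_embC (x y : MukaiLattice L) : mukaiC l (embC L x) (embC L y) = mZ L l x y := by
  simp [mukaiC_apply, embC, mZ]

lemma zsmul_mukaiC_embC_expB {N : ℤ} {B : LQ L} {b : L} (hNB : N • B = iLQ L b)
    (σ : LC L) (w : MukaiLattice L) :
    N • mukaiC l (embC L w) (expB L l B σ) = bC L l (iLC L (N • w.2.1 - w.1 • b)) σ := by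
  simp only [mukaiC_apply, embC, expB, map_sub, map_zsmul, LinearMap.sub_apply,
    LinearMap.smul_apply, ← zsmul_bC_qToC l hNB]
  simp only [zsmul_eq_mul]
  ring

lemma linearMap_ext_embC {M : Type*} [AddCommGroup M] [Module ℂ M]
    {f f' : (ℂ × LC L × ℂ) →ₗ[ℂ] M} (h : ∀ x, f (embC L x) = f' (embC L x)) : f = f' := by
  ext
  · simpa [embC, Prod.mk_zero_zero] using h (1, 0, 0)
  · simpa [embC, iLC_apply] using h (0, _, 0)
  · simpa [embC] using h (0, 0, 1)

variable {l} {g : MukaiLattice L ≃ₗ[ℤ] MukaiLattice L} {gC : (ℂ × LC L × ℂ) →ₗ[ℂ] (ℂ × LC L × ℂ)}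

lemma mukaiC_embC_map (hg : ∀ x y, mZ L l (g x) (g y) = mZ L l x y)
    (hgC : ∀ δ, gC (embC L δ) = embC L (g δ)) (w : MukaiLattice L) (v : ℂ × LC L × ℂ) :
    mukaiC l (embC L (g w)) (gC v) = mukaiC l (embC L w) v :=
  LinearMap.congr_fun (linearMap_ext_embC (f := (mukaiC l (embC L (g w))).comp gC)
    (f' := mukaiC l (embC L w)) fun y => by simp [hgC, hg]) v

variable (l) in
def mukaiTranscendental (v : ℂ × LC L × ℂ) : Submodule ℤ (MukaiLattice L) where
  carrier := {z | ∀ w, mukaiC l (embC L w) v = 0 → mZ L l z w = 0}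
  add_mem' {a b} ha hb w hw := by
    have ha := ha w hw
    have hb := hb w hw
    simp only [mZ, Prod.fst_add, Prod.snd_add, map_add, LinearMap.add_apply] at ha hb ⊢
    linear_combination ha + hb
  zero_mem' _ _ := by simp [mZ]
  smul_mem' c a ha w hw := by
    have ha := ha w hw
    simp only [mZ, Prod.smul_fst, Prod.smul_snd, map_zsmul, LinearMap.smul_apply,
      smul_eq_mul] at ha ⊢
    linear_combination c * ha

lemma mem_mukaiTranscendental {v : ℂ × LC L × ℂ} {z : MukaiLattice L} :
    z ∈ mukaiTranscendental l v ↔ ∀ w, mukaiC l (embC L w) v = 0 → mZ L l z w = 0 := Iff.rfl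

lemma map_mukaiTranscendental (hg : ∀ x y, mZ L l (g x) (g y) = mZ L l x y)
    (hgC : ∀ δ, gC (embC L δ) = embC L (g δ)) {μ : ℂ} (hμ : μ ≠ 0) {v v' : ℂ × LC L × ℂ}
    (hv : gC v = μ • v') :
    (mukaiTranscendental l v).map (g : MukaiLattice L →ₗ[ℤ] MukaiLattice L) =
      mukaiTranscendental l v' := by
  have horth : ∀ w, mukaiC l (embC L (g w)) v' = 0 ↔ mukaiC l (embC L w) v = 0 := by
    intro w
    rw [← mukaiC_embC_map hg hgC w v, hv, map_smul, smul_eq_mul, mul_eq_zero, or_iff_right hμ]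
  ext y
  obtain ⟨z, rfl⟩ := g.surjective y
  rw [Submodule.mem_map_equiv, g.symm_apply_apply, mem_mukaiTranscendental,
    mem_mukaiTranscendental]
  conv_rhs => rw [g.surjective.forall]
  simp only [horth, hg]

variable (l) in
lemma mem_mukaiTranscendental_expB_iff (σ : LC L) (B : LQ L) (z : MukaiLattice L) :
    z ∈ mukaiTranscendental l (expB L l B σ) ↔
      z.1 = 0 ∧ z.2.1 ∈ TXB L l σ B ∧ bQ L l (iLQ L z.2.1) B = z.2.2 := by
  obtain ⟨N, hN, b, hNB⟩ := exists_zsmul_eq_iLQ B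
  have horth : ∀ w, mukaiC l (embC L w) (expB L l B σ) = 0 ↔
      bC L l (iLC L (N • w.2.1 - w.1 • b)) σ = 0 := fun w => by
    rw [← zsmul_mukaiC_embC_expB l hNB, smul_eq_zero, or_iff_right hN]
  obtain ⟨a, γ, n⟩ := z
  simp only [mem_mukaiTranscendental, horth, bQ_iLQ_eq_intCast_iff l hN hNB]
  constructor
  · intro h
    have ha : a = 0 := by simpa [mZ] using h (0, 0, 1) (by simp)
    have hb : l γ b = N * n := by simpa [mZ, ha, sub_eq_zero] using h (N, b, 0) (by simp)
    refine ⟨ha, ⟨fun δ hδ => by simpa [mZ] using h (0, δ, 0) (by simp [hδ]), n, ?_⟩, hb⟩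
    rwa [bQ_iLQ_eq_intCast_iff l hN hNB]
  · rintro ⟨rfl, ⟨hpic, -⟩, hb⟩ ⟨c, δ, d⟩ hw
    have hγ := hpic _ hw
    simp only [map_sub, map_zsmul, hb, smul_eq_mul] at hγ
    have hmul : N * (l γ δ - c * n) = 0 := by linear_combination hγ
    simpa [mZ, hN, sub_eq_zero] using hmul

variable (l) in
def mukaiTranscendentalExpBEquiv (σ : LC L) (B : LQ L) :
    mukaiTranscendental l (expB L l B σ) ≃ₗ[ℤ] TXB L l σ B :=
  LinearEquiv.ofBijective
    ((LinearMap.fst ℤ L ℤ ∘ₗ LinearMap.snd ℤ ℤ (L × ℤ) ∘ₗ Submodule.subtype _).codRestrict _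
      fun z => ((mem_mukaiTranscendental_expB_iff l σ B z).1 z.2).2.1)
    ⟨fun z z' h => by
      obtain ⟨hfst, -, hlast⟩ := (mem_mukaiTranscendental_expB_iff l σ B z).1 z.2
      obtain ⟨hfst', -, hlast'⟩ := (mem_mukaiTranscendental_expB_iff l σ B z').1 z'.2
      have hmid : (z : MukaiLattice L).2.1 = (z' : MukaiLattice L).2.1 := congrArg Subtype.val h
      rw [hmid, hlast'] at hlast
      exact Subtype.ext <|
        Prod.ext (hfst.trans hfst'.symm) (Prod.ext hmid (Int.cast_injective hlast).symm),
     fun γ => by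
      obtain ⟨-, n, hn⟩ := γ.2
      exact ⟨⟨(0, γ, n), (mem_mukaiTranscendental_expB_iff l σ B _).2 ⟨rfl, γ.2, hn⟩⟩, rfl⟩⟩

lemma mZ_of_mem_mukaiTranscendental_expB {σ : LC L} {B : LQ L} {z z' : MukaiLattice L}
    (hz : z ∈ mukaiTranscendental l (expB L l B σ))
    (hz' : z' ∈ mukaiTranscendental l (expB L l B σ)) : mZ L l z z' = l z.2.1 z'.2.1 := by
  simp [mZ, ((mem_mukaiTranscendental_expB_iff l σ B z).1 hz).1,
    ((mem_mukaiTranscendental_expB_iff l σ B z').1 hz').1]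

lemma embC_eq_expB_iLC (hsymm : ∀ x y : L, l x y = l y x) {σ : LC L} {B : LQ L}
    {z : MukaiLattice L} (hz : z ∈ mukaiTranscendental l (expB L l B σ)) :
    embC L z = expB L l B (iLC L z.2.1) := by
  obtain ⟨hfst, -, hlast⟩ := (mem_mukaiTranscendental_expB_iff l σ B z).1 hz
  obtain ⟨N, hN, b, hNB⟩ := exists_zsmul_eq_iLQ B
  rw [bQ_iLQ_eq_intCast_iff l hN hNB] at hlast
  have hpair : bC L l (qToC L B) (iLC L z.2.1) = z.2.2 := by
    apply smul_right_injective ℂ hN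
    dsimp only
    rw [zsmul_bC_qToC l hNB, bC_iLC_iLC, hsymm, hlast, zsmul_eq_mul]
    push_cast
    rfl
  simp [embC, expB, hfst, hpair]

variable (l) in
def expBLinearMap (B : LQ L) : LC L →ₗ[ℂ] ℂ × LC L × ℂ :=
  LinearMap.prod 0 (LinearMap.prod LinearMap.id (bC L l (qToC L B)))

end MukaiLattice

theorem mukai_isometry_gives_twisted_hodge_isometry_general
    (L : Type) [AddCommGroup L]
    (l : L →ₗ[ℤ] L →ₗ[ℤ] ℤ) (hsymm : ∀ x y : L, l x y = l y x)
    (σ σ' : LC L)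
    (B B' : LQ L)
    (g : MukaiLattice L ≃ₗ[ℤ] MukaiLattice L)
    (hg : ∀ x y : MukaiLattice L, mZ L l (g x) (g y) = mZ L l x y)
    (gC : (ℂ × LC L × ℂ) →ₗ[ℂ] (ℂ × LC L × ℂ))
    (hgC : ∀ δ : MukaiLattice L, gC (embC L δ) = embC L (g δ))
    (hline : ∃ μ : ℂ, μ ≠ 0 ∧ gC (expB L l B σ) = μ • expB L l B' σ') :
    ∃ e : TXB L l σ B ≃ₗ[ℤ] TXB L l σ' B',
      (∀ γ γ' : TXB L l σ B, l ((e γ : L)) ((e γ' : L)) = l (γ : L) (γ' : L)) ∧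
      ∃ E : LC L →ₗ[ℂ] LC L,
        (∀ γ : TXB L l σ B, E (iLC L (γ : L)) = iLC L ((e γ : L))) ∧
        ∃ μ : ℂ, μ ≠ 0 ∧ E σ = μ • σ' := by
  obtain ⟨μ, hμ, hline⟩ := hline
  set P := mukaiTranscendentalExpBEquiv l σ B
  set G := g.ofSubmodules _ _ (map_mukaiTranscendental hg hgC hμ hline)
  have hP : ∀ γ, (P.symm γ : MukaiLattice L).2.1 = γ := fun γ =>
    congrArg Subtype.val (P.apply_symm_apply γ)
  refine ⟨P.symm ≪≫ₗ G ≪≫ₗ mukaiTranscendentalExpBEquiv l σ' B', fun γ γ' => ?_,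
    (LinearMap.fst ℂ (LC L) ℂ ∘ₗ LinearMap.snd ℂ ℂ (LC L × ℂ)) ∘ₗ gC ∘ₗ expBLinearMap l B,
    fun γ => ?_, μ, hμ, ?_⟩
  · have h := mZ_of_mem_mukaiTranscendental_expB (G (P.symm γ)).2 (G (P.symm γ')).2
    rw [LinearEquiv.ofSubmodules_apply, LinearEquiv.ofSubmodules_apply, hg,
      mZ_of_mem_mukaiTranscendental_expB (P.symm γ).2 (P.symm γ').2, hP, hP] at h
    exact h.symm
  · show (gC (expB L l B (iLC L γ))).2.1 = iLC L (g (P.symm γ)).2.1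
    rw [← hP γ, ← embC_eq_expB_iLC hsymm (P.symm γ).2, hgC]
    rfl
  · show (gC (expB L l B σ)).2.1 = μ • σ'
    rw [hline]
    rfl

/-- If an isometry `g` of the Mukai lattice has ℂ-linear extension
mapping the line `ℂ·exp(B)σ` onto `ℂ·exp(B')σ'`, then there is a Hodge isometry
`T(X,α_B) ≅ T(X',α_{B'})`: a ℤ-module isomorphism preserving the bilinear forms whose
ℂ-linear extension maps the line `ℂσ` onto the line `ℂσ'`. -/
theorem mukai_isometry_gives_twisted_hodge_isometry
    (L : Type) [AddCommGroup L] [Module.Free ℤ L] [Module.Finite ℤ L]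
    (l : L →ₗ[ℤ] L →ₗ[ℤ] ℤ) (hsymm : ∀ x y : L, l x y = l y x)
    (σ σ' : LC L)
    (hσ0 : bC L l σ σ = 0) (hσpos : 0 < bC L l σ (conjL L σ))
    (hσ'0 : bC L l σ' σ' = 0) (hσ'pos : 0 < bC L l σ' (conjL L σ'))
    (B B' : LQ L)
    (g : MukaiLattice L ≃ₗ[ℤ] MukaiLattice L)
    (hg : ∀ x y : MukaiLattice L, mZ L l (g x) (g y) = mZ L l x y)
    (gC : (ℂ × LC L × ℂ) →ₗ[ℂ] (ℂ × LC L × ℂ))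
    (hgC : ∀ δ : MukaiLattice L, gC (embC L δ) = embC L (g δ))
    (hline : ∃ μ : ℂ, μ ≠ 0 ∧ gC (expB L l B σ) = μ • expB L l B' σ') :
    ∃ e : TXB L l σ B ≃ₗ[ℤ] TXB L l σ' B',
      (∀ γ γ' : TXB L l σ B, l ((e γ : L)) ((e γ' : L)) = l (γ : L) (γ' : L)) ∧
      ∃ E : LC L →ₗ[ℂ] LC L,
        (∀ γ : TXB L l σ B, E (iLC L (γ : L)) = iLC L ((e γ : L))) ∧
        ∃ μ : ℂ, μ ≠ 0 ∧ E σ = μ • σ' :=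
  mukai_isometry_gives_twisted_hodge_isometry_general L l hsymm σ σ' B B' g hg gC hgC hline

end
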